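/- arXiv:1612.08069 — 3 statements merged into one kernel-verified Lean document; each statement's English description precedes it below -/
import Mathlib

section
/- For a positive definite Hermitian matrix M of size n, ln(det(M⁻¹)) equals the maximum over all positive semidefinite Hermitian matrices S of the function f(S) = -tr(S·M) + ln(det S) + n, and the maximum is attained uniquely at S = M⁻¹. -/
open ComplexOrder

/-!
Write `M = B⋆B` with `B` invertible and put `A = B S B⋆`: it is positive definite, with
`tr A = tr (S M)` and `det A = det S · det M`. Hence `ln det M⁻¹ - f(S) = tr A - ln det A - n`,
which is `∑ᵢ (λᵢ - 1 - ln λᵢ)` over the eigenvalues of `A`. By `ln x ≤ x - 1` this is nonnegative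
and vanishes only if all `λᵢ = 1`, that is `A = 1`, that is `S = M⁻¹`.
-/

namespace Matrix

open RCLike

variable {ι 𝕜 : Type*} [Fintype ι] [DecidableEq ι] [RCLike 𝕜] {A : Matrix ι ι 𝕜}

lemma IsHermitian.eq_one_of_eigenvalues_eq_one (hA : A.IsHermitian)
    (h : ∀ i, hA.eigenvalues i = 1) : A = 1 := by
  rw [hA.spectral_theorem, show RCLike.ofReal ∘ hA.eigenvalues = 1 by ext i; simp [h i],
    Pi.one_def, diagonal_one, map_one]

namespace PosDef

lemma re_det_pos (hA : A.PosDef) : 0 < re A.det := (RCLike.pos_iff.mp hA.det_pos).1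

lemma im_det (hA : A.PosDef) : im A.det = 0 := (RCLike.pos_iff.mp hA.det_pos).2

lemma re_det_mul (hA : A.PosDef) (B : Matrix ι ι 𝕜) : re (A * B).det = re A.det * re B.det := by
  rw [det_mul, mul_re, hA.im_det, zero_mul, sub_zero]

lemma re_det_inv (hA : A.PosDef) : re A⁻¹.det = (re A.det)⁻¹ := by
  rw [det_nonsing_inv, Ring.inverse_eq_inv', inv_re, normSq_apply, hA.im_det, mul_zero,
    add_zero, div_mul_cancel_left₀ hA.re_det_pos.ne']

lemma re_trace_sub_log_det_eq_sum (hA : A.PosDef) :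
    re A.trace - Real.log (re A.det) - Fintype.card ι =
      ∑ i, (hA.1.eigenvalues i - 1 - Real.log (hA.1.eigenvalues i)) := by
  have hdet : re A.det = ∏ i, hA.1.eigenvalues i := by
    rw [hA.1.det_eq_prod_eigenvalues, ← ofReal_prod, ofReal_re]
  rw [hA.1.trace_eq_sum_eigenvalues, hdet, Real.log_prod fun i _ => (hA.eigenvalues_pos i).ne',
    Finset.sum_sub_distrib, Finset.sum_sub_distrib]
  simp only [map_sum, ofReal_re, Finset.sum_const, Finset.card_univ, nsmul_eq_mul, mul_one]
  ring

lemma log_det_add_card_le_re_trace (hA : A.PosDef) :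
    Real.log (re A.det) + Fintype.card ι ≤ re A.trace := by
  have hsum : 0 ≤ ∑ i, (hA.1.eigenvalues i - 1 - Real.log (hA.1.eigenvalues i)) :=
    Finset.sum_nonneg fun i _ => by linarith [Real.log_le_sub_one_of_pos (hA.eigenvalues_pos i)]
  linarith [hA.re_trace_sub_log_det_eq_sum]

lemma eq_one_of_log_det_add_card_eq_re_trace (hA : A.PosDef)
    (h : Real.log (re A.det) + Fintype.card ι = re A.trace) : A = 1 := by
  refine hA.1.eq_one_of_eigenvalues_eq_one fun i => ?_
  by_contra hi
  have hlt : 0 < ∑ i, (hA.1.eigenvalues i - 1 - Real.log (hA.1.eigenvalues i)) :=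
    Finset.sum_pos' (fun j _ => by linarith [Real.log_le_sub_one_of_pos (hA.eigenvalues_pos j)])
      ⟨i, Finset.mem_univ i, by linarith [Real.log_lt_sub_one_of_pos (hA.eigenvalues_pos i) hi]⟩
  linarith [hA.re_trace_sub_log_det_eq_sum]

variable {M S : Matrix ι ι 𝕜}

open scoped MatrixOrder in
lemma exists_isUnit_and_eq_star_mul_self (hM : M.PosDef) : ∃ B, IsUnit B ∧ M = star B * B := by
  obtain ⟨B, rfl⟩ := CStarAlgebra.nonneg_iff_eq_star_mul_self.mp hM.posSemidef.nonneg
  exact ⟨B, isUnit_of_mul_isUnit_right hM.isUnit, rfl⟩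

lemma log_det_inv_sub_eq (hM : M.PosDef) (hS : S.PosDef) {B : Matrix ι ι 𝕜}
    (hMB : M = star B * B) :
    Real.log (re M⁻¹.det) - (-re (S * M).trace + Real.log (re S.det) + Fintype.card ι) =
      re (B * S * star B).trace - Real.log (re (B * S * star B).det) - Fintype.card ι := by
  have htr : (B * S * star B).trace = (S * M).trace := by
    rw [trace_mul_comm, ← mul_assoc, trace_mul_comm, hMB]
  have hdet : (B * S * star B).det = (S * M).det := by
    rw [mul_assoc, det_mul_comm, mul_assoc, hMB]
  rw [htr, hdet, hS.re_det_mul, hM.re_det_inv, Real.log_inv,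
    Real.log_mul hS.re_det_pos.ne' hM.re_det_pos.ne']
  ring

lemma neg_re_trace_mul_add_log_det_add_card_le (hM : M.PosDef) (hS : S.PosDef) :
    -re (S * M).trace + Real.log (re S.det) + Fintype.card ι ≤ Real.log (re M⁻¹.det) := by
  obtain ⟨B, hB, hMB⟩ := hM.exists_isUnit_and_eq_star_mul_self
  have hA : (B * S * star B).PosDef := (IsUnit.posDef_star_right_conjugate_iff hB).mpr hS
  linarith [hM.log_det_inv_sub_eq hS hMB, hA.log_det_add_card_le_re_trace]

lemma eq_inv_of_neg_re_trace_mul_add_log_det_add_card_eq (hM : M.PosDef) (hS : S.PosDef)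
    (h : -re (S * M).trace + Real.log (re S.det) + Fintype.card ι = Real.log (re M⁻¹.det)) :
    S = M⁻¹ := by
  obtain ⟨B, hB, hMB⟩ := hM.exists_isUnit_and_eq_star_mul_self
  have hA : (B * S * star B).PosDef := (IsUnit.posDef_star_right_conjugate_iff hB).mpr hS
  have hA1 : B * S * star B = 1 :=
    hA.eq_one_of_log_det_add_card_eq_re_trace (by linarith [hM.log_det_inv_sub_eq hS hMB])
  rw [mul_assoc, mul_eq_one_comm] at hA1
  exact (inv_eq_left_inv (by rw [hMB, ← mul_assoc, hA1])).symm

end PosDef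
end Matrix

/-- For Hermitian positive definite `M` of size `n`, `ln det M⁻¹` is the maximum of
`f(S) = -tr(S·M) + ln det S + n` over Hermitian positive semidefinite `S`
(with `f(S) = -∞` at singular `S`, where `ln det S = -∞`), and the maximum is
attained uniquely at `S = M⁻¹`. -/
theorem logdet_inv_isGreatest (n : ℕ) (M : Matrix (Fin n) (Fin n) ℂ) (hM : M.PosDef)
    (f : Matrix (Fin n) (Fin n) ℂ → EReal)
    (hf_pd : ∀ S : Matrix (Fin n) (Fin n) ℂ, S.PosDef →
      f S = ((-(S * M).trace.re + Real.log (S.det.re) + n : ℝ) : EReal))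
    (hf_sing : ∀ S : Matrix (Fin n) (Fin n) ℂ, ¬S.PosDef → f S = ⊥) :
    IsGreatest {y : EReal | ∃ S : Matrix (Fin n) (Fin n) ℂ, S.PosSemidef ∧ y = f S}
      ((Real.log ((M⁻¹).det.re) : ℝ) : EReal) ∧
    (∀ S : Matrix (Fin n) (Fin n) ℂ, S.PosSemidef →
      f S = ((Real.log ((M⁻¹).det.re) : ℝ) : EReal) → S = M⁻¹) := by
  have hf_inv : f M⁻¹ = (Real.log (M⁻¹.det.re) : EReal) := by
    rw [hf_pd _ hM.inv, Matrix.nonsing_inv_mul _ ((Matrix.isUnit_iff_isUnit_det M).mp hM.isUnit),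
      Matrix.trace_one]
    simp
  refine ⟨⟨⟨M⁻¹, hM.inv.posSemidef, hf_inv.symm⟩, ?_⟩, fun S _ hfS => ?_⟩
  · rintro _ ⟨S, -, rfl⟩
    by_cases hS : S.PosDef
    · rw [hf_pd S hS, EReal.coe_le_coe_iff]
      simpa using hM.neg_re_trace_mul_add_log_det_add_card_le hS
    · rw [hf_sing S hS]
      exact bot_le
  · by_cases hS : S.PosDef
    · rw [hf_pd S hS, EReal.coe_eq_coe_iff] at hfS
      exact hM.eq_inv_of_neg_re_trace_mul_add_log_det_add_card_eq hS (by simpa using hfS)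
    · rw [hf_sing S hS] at hfS
      exact absurd hfS.symm (EReal.coe_ne_bot _)
end

section
/- Let K ⊆ ℝ^N be a nonempty, closed, convex set and let F : K → ℝ^N be strongly monotone with modulus c > 0 (i.e., (x-y)ᵀ(F(x)-F(y)) ≥ c‖x-y‖² for all x,y ∈ K) and Lipschitz continuous with constant L. Then for any step size d with 0 < d < 2c/L², the map x ↦ Proj_K(x - d·F(x)) is a contraction on K, and its unique fixed point is the unique solution of VI(F,K). -/
set_option maxHeartbeats 1000000


/-- For a strongly monotone, Lipschitz map `F` on a nonempty closed convex `K` and step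
size `0 < d < 2c/L²`, the map `x ↦ Proj_K (x - d • F x)` is a contraction on `K`, and its
unique fixed point in `K` is the unique solution of `VI(F, K)`. -/
theorem VI_projection_contraction (N : ℕ)
    (K : Set (EuclideanSpace ℝ (Fin N)))
    (hne : K.Nonempty) (hcl : IsClosed K) (hconv : Convex ℝ K)
    (F : EuclideanSpace ℝ (Fin N) → EuclideanSpace ℝ (Fin N))
    (c L : ℝ) (hc : 0 < c)
    (hstrong : ∀ x ∈ K, ∀ y ∈ K, c * ‖x - y‖ ^ 2 ≤ inner (x - y) (F x - F y) (𝕜 := ℝ))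
    (hlip : ∀ x ∈ K, ∀ y ∈ K, ‖F x - F y‖ ≤ L * ‖x - y‖)
    (proj : EuclideanSpace ℝ (Fin N) → EuclideanSpace ℝ (Fin N))
    (hproj_mem : ∀ y, proj y ∈ K)
    (hproj : ∀ y, ∀ z ∈ K, inner (z - proj y) (y - proj y) (𝕜 := ℝ) ≤ 0)
    (d : ℝ) (hd : 0 < d) (hdL : d < 2 * c / L ^ 2) :
    (∃ κ : ℝ, κ < 1 ∧ ∀ x ∈ K, ∀ y ∈ K,
        ‖proj (x - d • F x) - proj (y - d • F y)‖ ≤ κ * ‖x - y‖) ∧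
    (∃! x', x' ∈ K ∧ proj (x' - d • F x') = x') ∧
    (∀ x' ∈ K, (proj (x' - d • F x') = x' ↔ ∀ x ∈ K, 0 ≤ inner (x - x') (F x') (𝕜 := ℝ))) ∧
    (∃! x', x' ∈ K ∧ ∀ x ∈ K, 0 ≤ inner (x - x') (F x') (𝕜 := ℝ)) := by
  -- L² is positive
  have hL2 : 0 < L ^ 2 := by
    rcases (sq_nonneg L).lt_or_eq with h | h
    · exact h
    · rw [← h, div_zero] at hdL; linarith
  have hdL2 : d * L ^ 2 < 2 * c := (lt_div_iff₀ hL2).mp hdL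
  set t : ℝ := 1 - 2 * d * c + d ^ 2 * L ^ 2 with ht
  set κ : ℝ := Real.sqrt (max t 0) with hκ
  have hκ0 : 0 ≤ κ := Real.sqrt_nonneg _
  have ht1 : max t 0 < 1 := by
    apply max_lt _ one_pos
    nlinarith
  have hκ1 : κ < 1 := by
    calc κ < Real.sqrt 1 := Real.sqrt_lt_sqrt (le_max_right _ _) ht1
    _ = 1 := Real.sqrt_one
  -- the contraction estimate
  have key : ∀ x ∈ K, ∀ y ∈ K,
      ‖proj (x - d • F x) - proj (y - d • F y)‖ ≤ κ * ‖x - y‖ := by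
    intro x hx y hy
    set a := x - d • F x with ha
    set b := y - d • F y with hb
    set p := proj a with hp
    set q := proj b with hq
    have h1 : inner (q - p) (a - p) (𝕜 := ℝ) ≤ 0 := hproj a q (hproj_mem b)
    have h2 : inner (p - q) (b - q) (𝕜 := ℝ) ≤ 0 := hproj b p (hproj_mem a)
    have h3 : ‖p - q‖ ^ 2 ≤ inner (p - q) (a - b) (𝕜 := ℝ) := by
      have e1 : inner (p - q) (a - b) (𝕜 := ℝ)
          = inner (p - q) (p - q) (𝕜 := ℝ)
            - inner (q - p) (a - p) (𝕜 := ℝ) - inner (p - q) (b - q) (𝕜 := ℝ) := by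
        simp only [inner_sub_left, inner_sub_right]
        ring
      rw [real_inner_self_eq_norm_sq] at e1
      linarith
    have h4 : inner (p - q) (a - b) (𝕜 := ℝ) ≤ ‖p - q‖ * ‖a - b‖ :=
      real_inner_le_norm _ _
    have h5 : ‖p - q‖ ≤ ‖a - b‖ := by
      nlinarith [norm_nonneg (p - q), norm_nonneg (a - b)]
    have hab : a - b = (x - y) - d • (F x - F y) := by
      rw [ha, hb]; module
    have h6 : ‖a - b‖ ^ 2 = ‖x - y‖ ^ 2 - 2 * d * inner (x - y) (F x - F y) (𝕜 := ℝ)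
        + d ^ 2 * ‖F x - F y‖ ^ 2 := by
      rw [hab, norm_sub_sq_real, real_inner_smul_right, norm_smul, Real.norm_eq_abs,
        abs_of_pos hd, mul_pow]
      ring
    have h7 : ‖F x - F y‖ ^ 2 ≤ L ^ 2 * ‖x - y‖ ^ 2 := by
      have := hlip x hx y hy
      nlinarith [norm_nonneg (F x - F y), norm_nonneg (x - y)]
    have h8 : ‖a - b‖ ^ 2 ≤ (max t 0) * ‖x - y‖ ^ 2 := by
      have hs := hstrong x hx y hy
      have hmax : t ≤ max t 0 := le_max_left _ _
      have hxy2 : (0:ℝ) ≤ ‖x - y‖ ^ 2 := sq_nonneg _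
      nlinarith
    have h9 : ‖a - b‖ ≤ κ * ‖x - y‖ := by
      have hs : ‖a - b‖ = Real.sqrt (‖a - b‖ ^ 2) := by
        rw [Real.sqrt_sq (norm_nonneg _)]
      rw [hs, hκ]
      calc Real.sqrt (‖a - b‖ ^ 2) ≤ Real.sqrt ((max t 0) * ‖x - y‖ ^ 2) :=
            Real.sqrt_le_sqrt h8
        _ = Real.sqrt (max t 0) * ‖x - y‖ := by
            rw [Real.sqrt_mul (le_max_right _ _), Real.sqrt_sq (norm_nonneg _)]
    exact h5.trans h9
  -- fixed-point / VI equivalence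
  have hiff : ∀ x' ∈ K, (proj (x' - d • F x') = x' ↔
      ∀ x ∈ K, 0 ≤ inner (x - x') (F x') (𝕜 := ℝ)) := by
    intro x' hx'
    constructor
    · intro hfix x hx
      have h := hproj (x' - d • F x') x hx
      rw [hfix] at h
      rw [show x' - d • F x' - x' = -(d • F x') by abel, inner_neg_right,
        real_inner_smul_right] at h
      nlinarith
    · intro hVI
      set p := proj (x' - d • F x') with hp
      have h1 : inner (x' - p) (x' - d • F x' - p) (𝕜 := ℝ) ≤ 0 := hproj _ x' hx'
      have h2 : 0 ≤ inner (p - x') (F x') (𝕜 := ℝ) := hVI p (hproj_mem _)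
      have e : inner (x' - p) (x' - d • F x' - p) (𝕜 := ℝ)
          = ‖x' - p‖ ^ 2 - d * inner (x' - p) (F x') (𝕜 := ℝ) := by
        rw [show x' - d • F x' - p = (x' - p) - d • F x' by abel, inner_sub_right,
          real_inner_smul_right, real_inner_self_eq_norm_sq]
      have h3 : inner (x' - p) (F x') (𝕜 := ℝ) = - inner (p - x') (F x') (𝕜 := ℝ) := by
        rw [← inner_neg_left, show -(p - x') = x' - p by abel]
      rw [e, h3] at h1
      have h4 : ‖x' - p‖ ^ 2 ≤ 0 := by nlinarith
      have h5 : ‖x' - p‖ = 0 := by nlinarith [sq_nonneg ‖x' - p‖, norm_nonneg (x' - p)]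
      exact (sub_eq_zero.mp (norm_eq_zero.mp h5)).symm
  -- existence of the fixed point via Banach
  have hfix_ex : ∃ x', x' ∈ K ∧ proj (x' - d • F x') = x' := by
    have hcomp : CompleteSpace K := hcl.completeSpace_coe
    have hKne : Nonempty K := hne.to_subtype
    let g : K → K := fun x => ⟨proj ((x : EuclideanSpace ℝ (Fin N)) - d • F x),
      hproj_mem _⟩
    have hlipg : LipschitzWith ⟨κ, hκ0⟩ g := LipschitzWith.of_dist_le_mul fun x y => by
      have h := key x.1 x.2 y.1 y.2
      show dist (proj (x.1 - d • F x.1)) (proj (y.1 - d • F y.1)) ≤ κ * dist x.1 y.1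
      rw [dist_eq_norm, dist_eq_norm]
      exact h
    have hcontr : ContractingWith ⟨κ, hκ0⟩ g := ⟨by exact_mod_cast hκ1, hlipg⟩
    refine ⟨(hcontr.fixedPoint g).1, (hcontr.fixedPoint g).2, ?_⟩
    exact congrArg Subtype.val hcontr.fixedPoint_isFixedPt
  -- uniqueness of the fixed point
  have hfix_uniq : ∀ x₁, (x₁ ∈ K ∧ proj (x₁ - d • F x₁) = x₁) →
      ∀ x₂, (x₂ ∈ K ∧ proj (x₂ - d • F x₂) = x₂) → x₁ = x₂ := by
    intro x₁ h₁ x₂ h₂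
    have h := key x₁ h₁.1 x₂ h₂.1
    rw [h₁.2, h₂.2] at h
    have hn : ‖x₁ - x₂‖ = 0 := by nlinarith [norm_nonneg (x₁ - x₂)]
    exact sub_eq_zero.mp (norm_eq_zero.mp hn)
  obtain ⟨x₀, hx₀⟩ := hfix_ex
  refine ⟨⟨κ, hκ1, key⟩, ⟨x₀, hx₀, fun y hy => hfix_uniq y hy x₀ hx₀⟩, hiff, ?_⟩
  refine ⟨x₀, ⟨hx₀.1, (hiff x₀ hx₀.1).1 hx₀.2⟩, ?_⟩
  rintro y ⟨hy, hVI⟩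
  exact hfix_uniq y ⟨hy, (hiff y hy).2 hVI⟩ x₀ hx₀
end

section
/- Let A be a block matrix with M×M blocks A_{ij}, each an N×N complex matrix, such that each diagonal block A_{ii} is Hermitian positive semidefinite and the block diagonal dominance condition λ_min(A_{ii}) ≥ ∑_{k≠i} ‖A_{ik}‖₂ holds for every i, where ‖·‖₂ is the spectral norm and λ_min the smallest eigenvalue. If additionally A is Hermitian, then A is positive semidefinite. -/
/-!
Write `x = (x_i)` blockwise and `w_ij = ‖A_ij‖₂`. The diagonal blocks contribute at least
`(∑_{k ≠ i} w_ik) ‖x_i‖²` to `Re ⟪x, A x⟫`, each off-diagonal block at least `-w_ij ‖x_i‖ ‖x_j‖`,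
and since `w` is symmetric for Hermitian `A`, summing `2 ‖x_i‖ ‖x_j‖ ≤ ‖x_i‖² + ‖x_j‖²` against
the weights `w_ij` shows that the diagonal contribution dominates.
-/

open ComplexOrder Finset Matrix

theorem sum_sum_erase_mul_mul_le_sum_mul_sq {ι : Type*} [Fintype ι] [DecidableEq ι]
    {w : ι → ι → ℝ} (hw : ∀ i j, 0 ≤ w i j) (hsymm : ∀ i j, w i j = w j i) (r : ι → ℝ) :
    ∑ i, ∑ j ∈ univ.erase i, w i j * (r i * r j) ≤ ∑ i, (∑ j ∈ univ.erase i, w i j) * r i ^ 2 := by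
  have hswap : ∑ i, ∑ j ∈ univ.erase i, w i j * r j ^ 2
      = ∑ i, ∑ j ∈ univ.erase i, w i j * r i ^ 2 := by
    rw [sum_comm' (t' := univ) (s' := fun j => univ.erase j) (by simp [ne_comm])]
    simp_rw [hsymm]
  have hamgm : ∀ i j, 2 * (w i j * (r i * r j)) ≤ w i j * r i ^ 2 + w i j * r j ^ 2 :=
    fun i j => by nlinarith [mul_nonneg (hw i j) (sq_nonneg (r i - r j))]
  have := sum_le_sum fun i (_ : i ∈ univ) => sum_le_sum fun j (_ : j ∈ univ.erase i) => hamgm i j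
  simp only [← mul_sum, sum_add_distrib, hswap, ← sum_mul] at this
  linarith

variable {𝕜 : Type*} [RCLike 𝕜]

theorem ContinuousLinearMap.neg_opNorm_mul_le_re_inner_apply {E : Type*} [NormedAddCommGroup E]
    [InnerProductSpace 𝕜 E] (T : E →L[𝕜] E) (u v : E) :
    -(‖T‖ * (‖u‖ * ‖v‖)) ≤ RCLike.re (inner 𝕜 u (T v)) := by
  have hnorm : ‖inner 𝕜 u (T v)‖ ≤ ‖T‖ * (‖u‖ * ‖v‖) :=
    calc ‖inner 𝕜 u (T v)‖ ≤ ‖u‖ * ‖T v‖ := norm_inner_le_norm u (T v)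
      _ ≤ ‖u‖ * (‖T‖ * ‖v‖) := by gcongr; exact T.le_opNorm v
      _ = ‖T‖ * (‖u‖ * ‖v‖) := by ring
  linarith [neg_abs_le (RCLike.re (inner 𝕜 u (T v))), RCLike.abs_re_le_norm (inner 𝕜 u (T v))]

namespace Matrix

variable {m n : Type*} [Fintype m] [Fintype n]

open scoped MatrixOrder

theorem IsHermitian.posSemidef_of_re_dotProduct_mulVec_nonneg {A : Matrix n n 𝕜}
    (hA : A.IsHermitian) (h : ∀ x, 0 ≤ RCLike.re (star x ⬝ᵥ A *ᵥ x)) : A.PosSemidef :=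
  .of_dotProduct_mulVec_nonneg hA fun x =>
    RCLike.nonneg_iff.mpr ⟨h x, hA.im_star_dotProduct_mulVec_self x⟩

variable [DecidableEq n]

theorem IsHermitian.algebraMap_le {C : Matrix n n 𝕜} (hC : C.IsHermitian) {c : ℝ}
    (hc : ∀ a, c ≤ hC.eigenvalues a) : algebraMap ℝ (Matrix n n 𝕜) c ≤ C := by
  rw [algebraMap_le_iff_le_spectrum (R := ℝ) hC.isSelfAdjoint,
    hC.spectrum_real_eq_range_eigenvalues]
  rintro _ ⟨a, rfl⟩
  exact hc a

theorem mul_norm_sq_le_re_inner_toEuclideanCLM {C : Matrix n n 𝕜} {c : ℝ}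
    (hC : algebraMap ℝ (Matrix n n 𝕜) c ≤ C) (u : EuclideanSpace 𝕜 n) :
    c * ‖u‖ ^ 2 ≤ RCLike.re (inner 𝕜 u (toEuclideanCLM (𝕜 := 𝕜) C u)) := by
  have hscalar : toEuclideanLin (algebraMap ℝ (Matrix n n 𝕜) c) u = c • u := by
    ext i
    simp [algebraMap_eq_diagonal, toLpLin_apply, mulVec_diagonal, Algebra.smul_def]
  have := (isPositive_toEuclideanLin_iff.mpr (le_iff.mp hC)).re_inner_nonneg_right u
  rwa [map_sub, LinearMap.sub_apply, inner_sub_right, map_sub, sub_nonneg, hscalar,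
    inner_smul_right_eq_smul, RCLike.smul_re, inner_self_eq_norm_sq] at this

theorem star_dotProduct_comp_mulVec (B : Matrix m m (Matrix n n 𝕜)) (x : m × n → 𝕜) :
    star x ⬝ᵥ comp m m n n 𝕜 B *ᵥ x = ∑ i, ∑ j,
      inner 𝕜 (WithLp.toLp 2 (Function.curry x i))
        (toEuclideanCLM (𝕜 := 𝕜) (B i j) (WithLp.toLp 2 (Function.curry x j))) := by
  simp only [EuclideanSpace.inner_eq_star_dotProduct, toEuclideanCLM_toLp, dotProduct, mulVec,
    Fintype.sum_prod_type, comp_apply, Pi.star_apply, sum_mul, mul_comm (star _),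
    Function.curry_apply]
  exact sum_congr rfl fun i _ => sum_comm

theorem posSemidef_comp_of_blockDiagDominant [DecidableEq m] {B : Matrix m m (Matrix n n 𝕜)}
    (hB : B.IsHermitian)
    (hdom : ∀ i, algebraMap ℝ (Matrix n n 𝕜)
      (∑ k ∈ univ.erase i, ‖toEuclideanCLM (𝕜 := 𝕜) (B i k)‖) ≤ B i i) :
    (comp m m n n 𝕜 B).PosSemidef := by
  refine (isHermitian_comp_iff.mpr hB).posSemidef_of_re_dotProduct_mulVec_nonneg fun x => ?_
  set v : m → EuclideanSpace 𝕜 n := fun i => WithLp.toLp 2 (Function.curry x i)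
  set w : m → m → ℝ := fun i j => ‖toEuclideanCLM (𝕜 := 𝕜) (B i j)‖
  have hsymm : ∀ i j, w i j = w j i := fun i j => by
    simp only [w]
    rw [← hB.apply i j, map_star]
    exact norm_star (toEuclideanCLM (𝕜 := 𝕜) (B j i))
  have hrow : ∀ i, (∑ k ∈ univ.erase i, w i k) * ‖v i‖ ^ 2
      - ∑ j ∈ univ.erase i, w i j * (‖v i‖ * ‖v j‖)
      ≤ ∑ j, RCLike.re (inner 𝕜 (v i) (toEuclideanCLM (𝕜 := 𝕜) (B i j) (v j))) := fun i => by
    rw [← add_sum_erase _ _ (mem_univ i), sub_eq_add_neg, ← sum_neg_distrib]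
    exact add_le_add (mul_norm_sq_le_re_inner_toEuclideanCLM (hdom i) (v i))
      (sum_le_sum fun j _ => ContinuousLinearMap.neg_opNorm_mul_le_re_inner_apply _ _ _)
  rw [star_dotProduct_comp_mulVec]
  simp only [map_sum]
  calc 0 ≤ ∑ i, (∑ k ∈ univ.erase i, w i k) * ‖v i‖ ^ 2
        - ∑ i, ∑ j ∈ univ.erase i, w i j * (‖v i‖ * ‖v j‖) :=
        sub_nonneg.mpr (sum_sum_erase_mul_mul_le_sum_mul_sq (fun _ _ => norm_nonneg _) hsymm _)
    _ ≤ _ := by rw [← sum_sub_distrib]; exact sum_le_sum fun i _ => hrow i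

end Matrix

/-- Block Gerschgorin criterion: a Hermitian block matrix with PSD diagonal blocks whose
smallest eigenvalues dominate the sum of spectral norms of the off-diagonal blocks in each
block row is positive semidefinite. -/
theorem block_diag_dominant_posSemidef (M N : ℕ)
    (B : Fin M → Fin M → Matrix (Fin N) (Fin N) ℂ)
    (A : Matrix (Fin M × Fin N) (Fin M × Fin N) ℂ)
    (hA : ∀ i j a b, A (i, a) (j, b) = B i j a b)
    (hHerm : A.IsHermitian)
    (hdiag : ∀ i, (B i i).PosSemidef)
    (hdom : ∀ i, ∀ a : Fin N,
      ∑ k ∈ Finset.univ.erase i, ‖Matrix.toEuclideanCLM (𝕜 := ℂ) (B i k)‖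
        ≤ (hdiag i).1.eigenvalues a) :
    A.PosSemidef := by
  obtain rfl : A = comp _ _ _ _ _ (of B) := by
    ext ⟨i, a⟩ ⟨j, b⟩
    exact hA i j a b
  exact posSemidef_comp_of_blockDiagDominant (isHermitian_comp_iff.mp hHerm)
    fun i => (hdiag i).1.algebraMap_le (hdom i)
end
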